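/- arXiv:0708.2948 — 6 statements merged into one kernel-verified Lean document; each statement's English description precedes it below -/
import Mathlib

section
/- Let γ, η: ℝ/ℤ → ℝ³ be C¹ closed curves with nowhere-vanishing derivatives whose images are disjoint, and let c ∈ ℝ³ lie in neither image, r > 0. Then ∬_{(ℝ/ℤ)²} |(I_{c,r}∘γ)′(s)| · |(I_{c,r}∘η)′(t)| / |I_{c,r}(γ(s)) − I_{c,r}(η(t))|² ds dt = ∬_{(ℝ/ℤ)²} |γ′(s)| · |η′(t)| / |γ(s) − η(t)|² ds dt. (Möbius invariance of the cross term of the energy of a two-component link, for which no renormalization is needed.) -/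
open MeasureTheory

noncomputable section

/-- ℝ³ with the Euclidean norm. -/
abbrev E3 := EuclideanSpace ℝ (Fin 3)

/-- Inversion in the sphere of center `c` and radius `r`. -/
def inv3 (c : E3) (r : ℝ) (x : E3) : E3 := c + (r ^ 2 / ‖x - c‖ ^ 2) • (x - c)

/-! The inversion `I = I_{c,R}` is conformal with factor `(R / |x - c|)²` at `x`, and
`|I x - I y| = R² / (|x - c| |y - c|) · |x - y|`. Hence the four conformal factors in the
numerator of the transformed integrand cancel exactly against the squared distance in its
denominator, and the two integrands agree pointwise. -/

theorem inv3_eq_inversion (c : E3) (r : ℝ) : inv3 c r = EuclideanGeometry.inversion c r := by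
  funext x
  simp only [inv3, EuclideanGeometry.inversion, vsub_eq_sub, vadd_eq_add, dist_eq_norm,
    div_pow, add_comm]

section

variable {F : Type*} [NormedAddCommGroup F] [InnerProductSpace ℝ F] {c : F} {R : ℝ}

open EuclideanGeometry

theorem norm_deriv_inversion_comp {f : ℝ → F} {s : ℝ} (hf : DifferentiableAt ℝ f s)
    (hfc : f s ≠ c) :
    ‖deriv (inversion c R ∘ f) s‖ = (R / dist (f s) c) ^ 2 * ‖deriv f s‖ := by
  rw [((hasFDerivAt_inversion hfc).comp_hasDerivAt s hf.hasDerivAt).deriv,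
    smul_apply, norm_smul, Real.norm_of_nonneg (sq_nonneg _)]
  simp

theorem conformal_factors_div_dist_inversion_sq {x y : F} (hx : x ≠ c) (hy : y ≠ c)
    (hR : R ≠ 0) (a b : ℝ) :
    (R / dist x c) ^ 2 * a * ((R / dist y c) ^ 2 * b) /
        dist (inversion c R x) (inversion c R y) ^ 2 =
      a * b / dist x y ^ 2 := by
  have hxc : dist x c ≠ 0 := dist_ne_zero.mpr hx
  have hyc : dist y c ≠ 0 := dist_ne_zero.mpr hy
  rw [dist_inversion_inversion hx hy]
  rcases eq_or_ne (dist x y) 0 with hxy | hxy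
  · simp [hxy]
  · field_simp

end

theorem cross_energy_inversion_invariant_general (γ η : ℝ → E3)
    (hγ : ContDiff ℝ 1 γ) (hη : ContDiff ℝ 1 η)
    (c : E3) (hcγ : c ∉ Set.range γ) (hcη : c ∉ Set.range η) (r : ℝ) (hr : 0 < r) :
    (∫ p in Set.Icc (0:ℝ) 1 ×ˢ Set.Icc (0:ℝ) 1,
        ‖deriv (inv3 c r ∘ γ) p.1‖ * ‖deriv (inv3 c r ∘ η) p.2‖ /
          ‖inv3 c r (γ p.1) - inv3 c r (η p.2)‖ ^ 2) =
      ∫ p in Set.Icc (0:ℝ) 1 ×ˢ Set.Icc (0:ℝ) 1,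
        ‖deriv γ p.1‖ * ‖deriv η p.2‖ / ‖γ p.1 - η p.2‖ ^ 2 := by
  refine integral_congr_ae (Filter.Eventually.of_forall fun ⟨s, t⟩ => ?_)
  have hγc : γ s ≠ c := fun h => hcγ ⟨s, h⟩
  have hηc : η t ≠ c := fun h => hcη ⟨t, h⟩
  simp only [← dist_eq_norm, inv3_eq_inversion,
    norm_deriv_inversion_comp (hγ.differentiable one_ne_zero s) hγc,
    norm_deriv_inversion_comp (hη.differentiable one_ne_zero t) hηc]
  exact conformal_factors_div_dist_inversion_sq hγc hηc hr.ne' _ _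

/-- Möbius invariance of the cross term of the energy of a two-component link:
for disjoint C¹ closed curves `γ, η` and an inversion `I_{c,r}` with center `c`
on neither curve,
`∬ |(I∘γ)′(s)||(I∘η)′(t)|/|I(γ(s))−I(η(t))|² ds dt = ∬ |γ′(s)||η′(t)|/|γ(s)−η(t)|² ds dt`. -/
theorem cross_energy_inversion_invariant (γ η : ℝ → E3)
    (hγ : ContDiff ℝ 1 γ) (hη : ContDiff ℝ 1 η)
    (hperγ : Function.Periodic γ 1) (hperη : Function.Periodic η 1)
    (hregγ : ∀ s, deriv γ s ≠ 0) (hregη : ∀ t, deriv η t ≠ 0)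
    (hdisj : ∀ s t : ℝ, γ s ≠ η t)
    (c : E3) (hcγ : c ∉ Set.range γ) (hcη : c ∉ Set.range η) (r : ℝ) (hr : 0 < r) :
    (∫ p in Set.Icc (0:ℝ) 1 ×ˢ Set.Icc (0:ℝ) 1,
        ‖deriv (inv3 c r ∘ γ) p.1‖ * ‖deriv (inv3 c r ∘ η) p.2‖ /
          ‖inv3 c r (γ p.1) - inv3 c r (η p.2)‖ ^ 2) =
      ∫ p in Set.Icc (0:ℝ) 1 ×ˢ Set.Icc (0:ℝ) 1,
        ‖deriv γ p.1‖ * ‖deriv η p.2‖ / ‖γ p.1 - η p.2‖ ^ 2 :=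
  cross_energy_inversion_invariant_general γ η hγ hη c hcγ hcη r hr
end
end

section
/- ∫₀¹ ∫₀¹ ( π²/sin²(π(s−t)) − 1/min(|s−t|, 1−|s−t|)² ) ds dt = 4, where the integrand is defined for s ≠ t (and arbitrarily on the measure-zero diagonal). Equivalently, the round circle of circumference 1 (for which the chord length between points of arc-length distance d equals sin(πd)/π) satisfies E∘(round circle) = 0. -/
/-!
The integrand is `k (s - t)` for the kernel `k x = π² / sin² (π x) - 1 / min(|x|, 1 - |x|)²`,
which is even and satisfies `k (1 - x) = k x` on `[0, 1]`. Hence `k (x - 1) = k x` there, every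
inner integral equals `∫₀¹ k`, and `∫₀¹ k = 2 ∫₀^{1/2} k`. On `(0, 1/2]` the kernel is
nonnegative (`sin y ≤ y`) and is the derivative of `G u = 1/u - π cot (π u)`, which satisfies
`0 ≤ G u ≤ π³ u / 4` and so tends to `0` at `0⁺`, while `G (1/2) = 2`. A nonnegative derivative
is integrable, and the fundamental theorem of calculus gives `∫₀^{1/2} k = 2`.
-/

open MeasureTheory Real

noncomputable section

/-- The arc-length distance on ℝ/ℤ, written for parameters `s, t ∈ [0,1]`. -/
def arcd (s t : ℝ) : ℝ := min |s - t| (1 - |s - t|)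

open Set Filter Topology intervalIntegral

section Symmetry

variable {E : Type*} [NormedAddCommGroup E] {f : ℝ → E}

theorem intervalIntegrable_upper_half_of_symm {b : ℝ} (hf : IntervalIntegrable f volume 0 (b / 2))
    (hsymm : ∀ x ∈ uIcc 0 (b / 2), f (b - x) = f x) : IntervalIntegrable f volume (b / 2) b := by
  have h := (hf.comp_sub_left b).symm
  rw [sub_zero, show b - b / 2 = b / 2 by ring] at h
  refine h.congr_uIoo fun x hx => ?_
  have hx' : b - x ∈ uIcc 0 (b / 2) := by
    rcases mem_uIcc.1 (uIoo_subset_uIcc_self hx) with ⟨h1, h2⟩ | ⟨h1, h2⟩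
    exacts [mem_uIcc.2 (Or.inl ⟨by linarith, by linarith⟩),
      mem_uIcc.2 (Or.inr ⟨by linarith, by linarith⟩)]
  simpa using (hsymm (b - x) hx').symm

variable [NormedSpace ℝ E]

theorem integral_eq_two_smul_of_symm {b : ℝ} (hf : IntervalIntegrable f volume 0 (b / 2))
    (hsymm : ∀ x ∈ uIcc 0 (b / 2), f (b - x) = f x) :
    ∫ x in 0..b, f x = (2 : ℝ) • ∫ x in 0..b / 2, f x := by
  have hrefl : ∫ x in b / 2..b, f x = ∫ x in 0..b / 2, f x := by
    rw [← integral_congr hsymm, integral_comp_sub_left, sub_zero, show b - b / 2 = b / 2 by ring]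
  rw [← integral_add_adjacent_intervals hf (intervalIntegrable_upper_half_of_symm hf hsymm), hrefl,
    two_smul]

theorem integral_comp_sub_left_eq_of_shift {T : ℝ} (hT : 0 ≤ T)
    (hf : IntervalIntegrable f volume (-T) T) (hshift : ∀ x ∈ Icc 0 T, f (x - T) = f x)
    {s : ℝ} (hs : s ∈ Icc 0 T) :
    ∫ t in 0..T, f (s - t) = ∫ x in 0..T, f x := by
  obtain ⟨hs0, hsT⟩ := hs
  have hint : ∀ {a b}, a ∈ Icc (-T) T → b ∈ Icc (-T) T → IntervalIntegrable f volume a b :=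
    fun ha hb => hf.mono_set (uIcc_subset_uIcc (by simpa [uIcc_of_le (by linarith : -T ≤ T)])
      (by simpa [uIcc_of_le (by linarith : -T ≤ T)]))
  have h1 : IntervalIntegrable f volume (s - T) 0 :=
    hint ⟨by linarith, by linarith⟩ ⟨by linarith, hT⟩
  have h2 : IntervalIntegrable f volume 0 s := hint ⟨by linarith, hT⟩ ⟨by linarith, hsT⟩
  have h3 : IntervalIntegrable f volume s T := hint ⟨by linarith, hsT⟩ ⟨by linarith, le_rfl⟩
  have hshift' : ∫ x in s - T..0, f x = ∫ x in s..T, f x := by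
    have h := integral_comp_sub_right f T (a := s) (b := T)
    rw [sub_self] at h
    rw [← h]
    refine integral_congr fun x hx => hshift x ?_
    rw [uIcc_of_le hsT] at hx
    exact ⟨hs0.trans hx.1, hx.2⟩
  rw [integral_comp_sub_left, sub_zero, ← integral_add_adjacent_intervals h1 h2, hshift',
    add_comm, integral_add_adjacent_intervals h2 h3]

end Symmetry

theorem sin_sub_mul_cos_nonneg {y : ℝ} (h0 : 0 ≤ y) (h1 : y < π / 2) : 0 ≤ sin y - y * cos y := by
  rcases h0.eq_or_lt with rfl | h0
  · simp
  have hcos : 0 < cos y := cos_pos_of_mem_Ioo ⟨by linarith [pi_pos], h1⟩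
  have htan := lt_tan h0 h1
  rw [tan_eq_sin_div_cos, lt_div_iff₀ hcos] at htan
  linarith

theorem sin_sub_mul_cos_le {y : ℝ} (h0 : 0 ≤ y) : sin y - y * cos y ≤ y ^ 3 / 2 := by
  nlinarith [sin_le h0, one_sub_sq_div_two_le_cos (x := y)]

theorem two_mul_le_sin_pi_mul {u : ℝ} (h0 : 0 ≤ u) (h1 : u ≤ 1 / 2) : 2 * u ≤ sin (π * u) := by
  have h := mul_le_sin (x := π * u) (by positivity) (by nlinarith [pi_pos])
  rwa [div_mul_eq_mul_div, mul_left_comm, mul_div_cancel_left₀ _ pi_ne_zero] at h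

namespace RoundCircle

def kernel (x : ℝ) : ℝ := π ^ 2 / sin (π * x) ^ 2 - 1 / min |x| (1 - |x|) ^ 2

/-- `primitive 0 = 0` through the junk values `0⁻¹ = 0` and `cot 0 = 0`, and this is also the
limit at `0⁺`, so `primitive` is continuous on `[0, 1/2]`. -/
def primitive (u : ℝ) : ℝ := u⁻¹ - π * cot (π * u)

theorem kernel_neg (x : ℝ) : kernel (-x) = kernel x := by
  simp [kernel]

theorem kernel_one_sub {x : ℝ} (hx : x ∈ Icc (0 : ℝ) 1) : kernel (1 - x) = kernel x := by
  have h1 : |1 - x| = 1 - x := abs_of_nonneg (by linarith [hx.2])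
  rw [kernel, kernel, h1, abs_of_nonneg hx.1, mul_sub, mul_one, sin_pi_sub, sub_sub_cancel,
    min_comm]

theorem kernel_sub_one {x : ℝ} (hx : x ∈ Icc (0 : ℝ) 1) : kernel (x - 1) = kernel x := by
  rw [← neg_sub, kernel_neg, kernel_one_sub hx]

theorem kernel_of_mem_Ioc {u : ℝ} (hu : u ∈ Ioc (0 : ℝ) (1 / 2)) :
    kernel u = π ^ 2 / sin (π * u) ^ 2 - 1 / u ^ 2 := by
  rw [kernel, abs_of_pos hu.1, min_eq_left (by linarith [hu.2])]

theorem kernel_nonneg {u : ℝ} (hu : u ∈ Ioc (0 : ℝ) (1 / 2)) : 0 ≤ kernel u := by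
  have hu0 := hu.1
  have hsin : 0 < sin (π * u) := (mul_pos two_pos hu0).trans_le (two_mul_le_sin_pi_mul hu0.le hu.2)
  rw [kernel_of_mem_Ioc hu, sub_nonneg, div_le_div_iff₀ (by positivity) (by positivity), one_mul,
    ← mul_pow]
  exact pow_le_pow_left₀ hsin.le (sin_le (by positivity)) 2

theorem hasDerivAt_primitive {u : ℝ} (hu : u ∈ Ioo (0 : ℝ) 1) :
    HasDerivAt primitive (π ^ 2 / sin (π * u) ^ 2 - 1 / u ^ 2) u := by
  have hsin : sin (π * u) ≠ 0 :=
    (sin_pos_of_pos_of_lt_pi (by nlinarith [pi_pos, hu.1]) (by nlinarith [pi_pos, hu.2])).ne'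
  have hlin : HasDerivAt (fun u => π * u) π u := by simpa using (hasDerivAt_id u).const_mul π
  have hcot : HasDerivAt (fun u => cot (π * u)) (-π / sin (π * u) ^ 2) u := by
    simp only [cot_eq_cos_div_sin]
    refine (hlin.cos.fun_div hlin.sin hsin).congr_deriv ?_
    linear_combination -π * Real.sin_sq_add_cos_sq (π * u) / sin (π * u) ^ 2
  refine ((hasDerivAt_inv hu.1.ne').fun_sub (hcot.const_mul π)).congr_deriv ?_
  ring

theorem primitive_zero : primitive 0 = 0 := by simp [primitive, cot_eq_cos_div_sin]

theorem primitive_half : primitive (1 / 2) = 2 := by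
  norm_num [primitive, cot_eq_cos_div_sin, mul_div_assoc']

theorem primitive_mem_Icc {u : ℝ} (hu : u ∈ Ioo (0 : ℝ) (1 / 2)) :
    primitive u ∈ Icc 0 (π ^ 3 * u / 4) := by
  obtain ⟨hu0, hu1⟩ := hu
  have hy0 : 0 ≤ π * u := by positivity
  have hsin : 2 * u ≤ sin (π * u) := two_mul_le_sin_pi_mul hu0.le hu1.le
  have hprim : primitive u = (sin (π * u) - π * u * cos (π * u)) / (u * sin (π * u)) := by
    have hs : sin (π * u) ≠ 0 := by linarith
    rw [primitive, cot_eq_cos_div_sin]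
    generalize sin (π * u) = s at hs ⊢
    field_simp
  rw [hprim]
  constructor
  · exact div_nonneg (sin_sub_mul_cos_nonneg hy0 (by nlinarith [pi_pos])) (by nlinarith)
  · rw [div_le_iff₀ (by nlinarith)]
    calc sin (π * u) - π * u * cos (π * u) ≤ (π * u) ^ 3 / 2 := sin_sub_mul_cos_le hy0
      _ = π ^ 3 * u / 4 * (u * (2 * u)) := by ring
      _ ≤ π ^ 3 * u / 4 * (u * sin (π * u)) := by gcongr

theorem tendsto_primitive_zero : Tendsto primitive (𝓝[>] 0) (𝓝 0) := by
  have hlin : Tendsto (fun u => π ^ 3 * u / 4) (𝓝[>] 0) (𝓝 0) :=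
    ((by fun_prop : Continuous fun u : ℝ => π ^ 3 * u / 4).tendsto' 0 0 (by simp)).mono_left
      nhdsWithin_le_nhds
  have hbounds : ∀ᶠ u in 𝓝[>] 0, primitive u ∈ Icc 0 (π ^ 3 * u / 4) :=
    Filter.mem_of_superset (Ioo_mem_nhdsGT (by norm_num : (0 : ℝ) < 1 / 2))
      fun u hu => primitive_mem_Icc hu
  exact tendsto_of_tendsto_of_tendsto_of_le_of_le' tendsto_const_nhds hlin
    (hbounds.mono fun u hu => hu.1) (hbounds.mono fun u hu => hu.2)

theorem continuousOn_primitive : ContinuousOn primitive (Icc 0 (1 / 2)) := by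
  intro u hu
  rcases hu.1.eq_or_lt with rfl | hu0
  · have h : ContinuousWithinAt primitive (Ioi 0) 0 := by
      rw [ContinuousWithinAt, primitive_zero]
      exact tendsto_primitive_zero
    exact (continuousWithinAt_Ioi_iff_Ici.1 h).mono Icc_subset_Ici_self
  · exact (hasDerivAt_primitive ⟨hu0, by linarith [hu.2]⟩).continuousAt.continuousWithinAt

theorem hasDerivAt_primitive_kernel {u : ℝ} (hu : u ∈ Ioo (0 : ℝ) (1 / 2)) :
    HasDerivAt primitive (kernel u) u := by
  rw [kernel_of_mem_Ioc (Ioo_subset_Ioc_self hu)]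
  exact hasDerivAt_primitive ⟨hu.1, by linarith [hu.2]⟩

theorem intervalIntegrable_kernel_half : IntervalIntegrable kernel volume 0 (1 / 2) := by
  refine intervalIntegrable_deriv_of_nonneg (g := primitive) ?_ ?_ ?_
  · simpa [uIcc_of_le] using continuousOn_primitive
  · simpa using fun x hx => hasDerivAt_primitive_kernel hx
  · simpa using fun x hx => kernel_nonneg (Ioo_subset_Ioc_self hx)

theorem integral_kernel_half : ∫ x in 0..1 / 2, kernel x = 2 := by
  rw [integral_eq_sub_of_hasDerivAt_of_le (by norm_num) continuousOn_primitive
    (fun x hx => hasDerivAt_primitive_kernel hx) intervalIntegrable_kernel_half, primitive_half,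
    primitive_zero, sub_zero]

theorem kernel_one_sub_of_mem_uIcc {x : ℝ} (hx : x ∈ uIcc (0 : ℝ) (1 / 2)) :
    kernel (1 - x) = kernel x := by
  rw [uIcc_of_le (by norm_num)] at hx
  exact kernel_one_sub ⟨hx.1, by linarith [hx.2]⟩

theorem intervalIntegrable_kernel : IntervalIntegrable kernel volume (-1) 1 := by
  have h01 : IntervalIntegrable kernel volume 0 1 := intervalIntegrable_kernel_half.trans
    (intervalIntegrable_upper_half_of_symm (b := 1) intervalIntegrable_kernel_half
      fun x hx => kernel_one_sub_of_mem_uIcc hx)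
  have hneg : IntervalIntegrable kernel volume (-1) 0 := by
    simpa [kernel_neg] using (h01.comp_sub_left 0).symm
  exact hneg.trans h01

theorem integral_kernel : ∫ x in 0..1, kernel x = 4 := by
  rw [integral_eq_two_smul_of_symm (b := 1) intervalIntegrable_kernel_half
    fun x hx => kernel_one_sub_of_mem_uIcc hx, integral_kernel_half]
  norm_num

end RoundCircle

/-- The round circle of circumference 1 has O'Hara energy `E∘ = 0`: since the chord
length between points of arc-length distance `d` is `sin(πd)/π`, this reads
`∫₀¹∫₀¹ ( π²/sin²(π(s−t)) − 1/min(|s−t|, 1−|s−t|)² ) ds dt = 4`. -/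
theorem round_circle_energy :
    (∫ s in (0:ℝ)..1, ∫ t in (0:ℝ)..1,
        (π ^ 2 / Real.sin (π * (s - t)) ^ 2 - 1 / arcd s t ^ 2)) = 4 := by
  have hinner : ∀ s ∈ uIcc (0 : ℝ) 1,
      ∫ t in (0:ℝ)..1, (π ^ 2 / Real.sin (π * (s - t)) ^ 2 - 1 / arcd s t ^ 2) = 4 := by
    intro s hs
    rw [uIcc_of_le zero_le_one] at hs
    change ∫ t in (0:ℝ)..1, RoundCircle.kernel (s - t) = 4
    rw [integral_comp_sub_left_eq_of_shift zero_le_one RoundCircle.intervalIntegrable_kernel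
      (fun x hx => RoundCircle.kernel_sub_one hx) hs, RoundCircle.integral_kernel]
  rw [integral_congr hinner]
  norm_num
end
end

section
/- Let 0 < α < 3 and let γ: ℝ/ℤ → ℝ³ be a C² injective closed curve parametrized by arc length (|γ′| ≡ 1, total length 1). Then the nonnegative function (s,t) ↦ 1/|γ(s)−γ(t)|^α − 1/d(s,t)^α is integrable on (ℝ/ℤ)², i.e. E^(α)(γ) = ∬_{(ℝ/ℤ)²} ( 1/|γ(s)−γ(t)|^α − 1/d(s,t)^α ) ds dt < ∞. (E^(α) is well-defined for α < 3.) -/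
/-!
Write `r = ‖γ s - γ t‖` for the chord and `d = arcd s t` for the arc. Unit speed gives `r ≤ d`.
Since the unit tangent is Lipschitz and `⟪γ'(t), γ'(u)⟫ = 1 - ‖γ'(u) - γ'(t)‖² / 2`, the chord
falls short of the arc only to third order, `d - r ≤ K d³`; together with injectivity and
compactness this makes `γ` bi-Lipschitz for the arc distance, `c d ≤ r`. Hence
`0 ≤ 1/r^α - 1/d^α ≲ (d - r) / (r^α d) ≲ d^(2-α)`, and `d^(2-α)` is integrable on the square
because `2 - α > -1`.
-/

open MeasureTheory

noncomputable section

open Set Function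
open scoped NNReal RealInnerProductSpace

namespace Real

theorem one_sub_rpow_le_max_mul {x α : ℝ} (hx0 : 0 ≤ x) (hx1 : x ≤ 1) (hα : 0 < α) :
    1 - x ^ α ≤ max 1 α * (1 - x) := by
  rcases le_total α 1 with h | h
  · have : x ≤ x ^ α := by simpa using rpow_le_rpow_of_exponent_ge' hx0 hx1 hα.le h
    nlinarith [le_max_left 1 α]
  · have := one_add_mul_self_le_rpow_one_add (by linarith : (-1 : ℝ) ≤ x - 1) h
    rw [add_sub_cancel] at this
    nlinarith [le_max_right 1 α]

theorem one_div_rpow_sub_one_div_rpow_le {α r d : ℝ} (hα : 0 < α) (hr : 0 < r) (hrd : r ≤ d) :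
    1 / r ^ α - 1 / d ^ α ≤ max 1 α * (d - r) / (r ^ α * d) := by
  have hd : 0 < d := hr.trans_le hrd
  have key := one_sub_rpow_le_max_mul (div_pos hr hd).le ((div_le_one hd).mpr hrd) hα
  rw [div_rpow hr.le hd.le] at key
  have hrα := rpow_pos_of_pos hr α
  have hdα := rpow_pos_of_pos hd α
  calc 1 / r ^ α - 1 / d ^ α = (1 - r ^ α / d ^ α) / r ^ α := by field_simp
    _ ≤ max 1 α * (1 - r / d) / r ^ α := by gcongr
    _ = max 1 α * (d - r) / (r ^ α * d) := by field_simp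

theorem min_rpow_le_add {a b : ℝ} (ha : 0 ≤ a) (hb : 0 ≤ b) (β : ℝ) :
    min a b ^ β ≤ a ^ β + b ^ β := by
  have := rpow_nonneg ha β
  have := rpow_nonneg hb β
  rcases min_choice a b with h | h <;> rw [h] <;> linarith

end Real

theorem abs_one_div_rpow_sub_one_div_rpow_le {α c K r d : ℝ} (hα : 0 < α) (hc : 0 < c)
    (hK : 0 ≤ K) (hd : 0 ≤ d) (hcr : c * d ≤ r) (hrd : r ≤ d) (hdr : d - r ≤ K * d ^ 3) :
    |1 / r ^ α - 1 / d ^ α| ≤ max 1 α * K / c ^ α * d ^ (2 - α) := by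
  have hbound : 0 ≤ max 1 α * K / c ^ α * d ^ (2 - α) := by positivity
  rcases hd.eq_or_lt with rfl | hd
  · obtain rfl : r = 0 := le_antisymm hrd (by simpa using hcr)
    simpa using hbound
  have hr : 0 < r := (mul_pos hc hd).trans_le hcr
  have hrα := Real.rpow_pos_of_pos hr α
  have hdα := Real.rpow_pos_of_pos hd α
  have hnonneg : 0 ≤ 1 / r ^ α - 1 / d ^ α :=
    sub_nonneg.mpr (one_div_le_one_div_of_le hrα (Real.rpow_le_rpow hr.le hrd hα.le))
  rw [abs_of_nonneg hnonneg]
  have hcdα : (c * d) ^ α ≤ r ^ α := Real.rpow_le_rpow (by positivity) hcr hα.le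
  calc 1 / r ^ α - 1 / d ^ α ≤ max 1 α * (d - r) / (r ^ α * d) :=
        Real.one_div_rpow_sub_one_div_rpow_le hα hr hrd
    _ ≤ max 1 α * (K * d ^ 3) / ((c * d) ^ α * d) := by gcongr
    _ = max 1 α * K / c ^ α * d ^ (2 - α) := by
        rw [Real.mul_rpow hc.le hd.le, Real.rpow_sub hd, Real.rpow_two]
        field_simp

theorem arcd_nonneg {s t : ℝ} (h : |s - t| ≤ 1) : 0 ≤ arcd s t :=
  le_min (abs_nonneg _) (sub_nonneg.mpr h)

theorem arcd_le_half (s t : ℝ) : arcd s t ≤ 1 / 2 := by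
  unfold arcd
  rcases le_total |s - t| (1 / 2) with h | h
  · exact (min_le_left _ _).trans h
  · exact (min_le_right _ _).trans (by linarith)

theorem arcd_sub_zero (s t : ℝ) : arcd (s - t) 0 = arcd s t := by
  simp [arcd]

theorem arcd_neg_zero (u : ℝ) : arcd (-u) 0 = arcd u 0 := by
  simp [arcd]

theorem exists_int_abs_add_sub_eq_arcd {s t : ℝ} (h : |s - t| ≤ 1) :
    ∃ n : ℤ, |s + n - t| = arcd s t := by
  rcases min_choice |s - t| (1 - |s - t|) with hmin | hmin
  · exact ⟨0, by simpa [arcd] using hmin.symm⟩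
  rcases le_total t s with hts | hst
  · refine ⟨-1, ?_⟩
    rw [arcd, hmin, abs_of_nonneg (sub_nonneg.mpr hts),
      abs_of_nonpos (by push_cast; linarith [abs_le.mp h])]
    push_cast; ring
  · refine ⟨1, ?_⟩
    rw [arcd, hmin, abs_of_nonpos (sub_nonpos.mpr hst),
      abs_of_nonneg (by push_cast; linarith [abs_le.mp h])]
    push_cast; ring

theorem MeasureTheory.IntegrableOn.comp_sub_prod {g : ℝ → ℝ} {a b c d : ℝ}
    (hg : IntegrableOn g (Icc (a - d) (b - c))) :
    IntegrableOn (fun p : ℝ × ℝ => g (p.1 - p.2)) (Icc a b ×ˢ Icc c d) := by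
  have hone : Integrable ((Icc c d).indicator fun _ => (1 : ℝ)) :=
    (integrableOn_const measure_Icc_lt_top.ne).integrable_indicator measurableSet_Icc
  have h := hone.convolution_integrand (ContinuousLinearMap.mul ℝ ℝ)
    (hg.integrable_indicator measurableSet_Icc)
  rw [← Measure.volume_eq_prod] at h
  refine h.integrableOn.congr_fun (fun p ⟨hs, ht⟩ => ?_) (measurableSet_Icc.prod measurableSet_Icc)
  have hst : p.1 - p.2 ∈ Icc (a - d) (b - c) :=
    ⟨by linarith [hs.1, ht.2], by linarith [hs.2, ht.1]⟩
  simp [indicator_of_mem ht, indicator_of_mem hst]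

theorem intervalIntegrable_arcd_rpow {β : ℝ} (hβ : -1 < β) :
    IntervalIntegrable (fun u => arcd u 0 ^ β) volume (-1) 1 := by
  have hpos : IntervalIntegrable (fun u => arcd u 0 ^ β) volume 0 1 := by
    have hdom : IntervalIntegrable (fun u : ℝ => u ^ β + (1 - u) ^ β) volume 0 1 := by
      refine (intervalIntegral.intervalIntegrable_rpow' hβ).add ?_
      simpa using (intervalIntegral.intervalIntegrable_rpow' hβ (a := 1) (b := 0)).comp_sub_left 1
    refine hdom.mono_fun' (by unfold arcd; fun_prop : Measurable _).aestronglyMeasurable ?_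
    rw [uIoc_of_le zero_le_one]
    filter_upwards [ae_restrict_mem measurableSet_Ioc] with u ⟨hu0, hu1⟩
    have hu : |u - 0| ≤ 1 := by rw [sub_zero, abs_of_pos hu0]; exact hu1
    rw [Real.norm_of_nonneg (Real.rpow_nonneg (arcd_nonneg hu) β)]
    simpa [arcd, abs_of_pos hu0] using Real.min_rpow_le_add hu0.le (sub_nonneg.mpr hu1) β
  have hneg : IntervalIntegrable (fun u => arcd u 0 ^ β) volume (-1) 0 := by
    simpa [arcd_neg_zero] using
      ((IntervalIntegrable.iff_comp_neg (f := fun u => arcd u 0 ^ β)).mp hpos).symm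
  exact hneg.trans hpos

theorem integrableOn_arcd_rpow {β : ℝ} (hβ : -1 < β) :
    IntegrableOn (fun p : ℝ × ℝ => arcd p.1 p.2 ^ β) (Icc 0 1 ×ˢ Icc 0 1) := by
  have h : IntegrableOn (fun u => arcd u 0 ^ β) (Icc (0 - 1) (1 - 0)) := by
    rw [zero_sub, sub_zero, ← intervalIntegrable_iff_integrableOn_Icc_of_le (by norm_num)]
    exact intervalIntegrable_arcd_rpow hβ
  simpa only [arcd_sub_zero] using h.comp_sub_prod

theorem continuous_arcd : Continuous fun p : ℝ × ℝ => arcd p.1 p.2 := by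
  unfold arcd; fun_prop

theorem Function.Periodic.exists_abs_sub_eq_arcd {X : Type*} {γ : ℝ → X} (hper : Periodic γ 1)
    {s t : ℝ} (h : |s - t| ≤ 1) : ∃ s', γ s' = γ s ∧ |s' - t| = arcd s t := by
  obtain ⟨n, hn⟩ := exists_int_abs_add_sub_eq_arcd h
  exact ⟨s + n, by simpa using hper.int_mul n s, hn⟩

theorem ne_of_arcd_pos {X : Type*} {γ : ℝ → X} (hper : Periodic γ 1)
    (hinj : ∀ s t : ℝ, γ s = γ t → ∃ n : ℤ, s - t = n)
    {s t : ℝ} (h : |s - t| ≤ 1) (hd : 0 < arcd s t) : γ s ≠ γ t := by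
  intro heq
  obtain ⟨s', hs', hd'⟩ := hper.exists_abs_sub_eq_arcd h
  obtain ⟨m, hm⟩ := hinj s' t (hs'.trans heq)
  have hm0 : m = 0 := by
    have : |(m : ℝ)| < 1 := by linarith [hm ▸ hd' ▸ arcd_le_half s t]
    exact Int.abs_lt_one_iff.mp (by exact_mod_cast this)
  simp [← hd', hm, hm0] at hd

theorem norm_sub_le_arcd {E : Type*} [SeminormedAddCommGroup E] {γ : ℝ → E}
    (hper : Periodic γ 1) (hlip : LipschitzWith 1 γ) {s t : ℝ} (h : |s - t| ≤ 1) :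
    ‖γ s - γ t‖ ≤ arcd s t := by
  obtain ⟨s', hs', hd'⟩ := hper.exists_abs_sub_eq_arcd h
  calc ‖γ s - γ t‖ = ‖γ s' - γ t‖ := by rw [hs']
    _ ≤ |s' - t| := by simpa [dist_eq_norm, Real.dist_eq] using hlip.dist_le_mul s' t
    _ = arcd s t := hd'

theorem Function.Periodic.deriv {F : Type*} [NormedAddCommGroup F] [NormedSpace ℝ F]
    {f : ℝ → F} {c : ℝ} (hf : Periodic f c) : Periodic (deriv f) c := fun x => by
  rw [← deriv_comp_add_const, show (fun y => f (y + c)) = f from funext hf]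

section NormedSpace

variable {E : Type*} [NormedAddCommGroup E] [NormedSpace ℝ E] {γ : ℝ → E}

theorem exists_lipschitzWith_deriv_of_periodic {c : ℝ} (hper : Periodic γ c) (hc : c ≠ 0)
    (hγ : ContDiff ℝ 2 γ) : ∃ M, LipschitzWith M (deriv γ) := by
  have hγ' : ContDiff ℝ 1 (deriv γ) := hγ.deriv'
  obtain ⟨M, hM⟩ := isBounded_iff_forall_norm_le.mp
    (hper.deriv.deriv.isBounded_of_continuous hc hγ'.continuous_deriv_one)
  refine ⟨M.toNNReal, lipschitzWith_of_nnnorm_deriv_le (hγ'.differentiable one_ne_zero) fun x => ?_⟩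
  rw [← NNReal.coe_le_coe, coe_nnnorm]
  exact (hM _ (mem_range_self x)).trans (Real.le_coe_toNNReal M)

theorem lipschitzWith_one_of_norm_deriv_eq_one (hγ : Differentiable ℝ γ)
    (hunit : ∀ s, ‖deriv γ s‖ = 1) : LipschitzWith 1 γ :=
  lipschitzWith_of_nnnorm_deriv_le hγ fun s => by
    rw [← NNReal.coe_le_coe, coe_nnnorm, hunit]; rfl

end NormedSpace

section InnerProductSpace

variable {E : Type*} [NormedAddCommGroup E] [InnerProductSpace ℝ E] {γ : ℝ → E}

theorem sub_sub_cube_le_norm_sub {M : ℝ≥0} (hγ : Differentiable ℝ γ)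
    (hunit : ∀ s, ‖deriv γ s‖ = 1) (hlip : LipschitzWith M (deriv γ)) (s t : ℝ) :
    |s - t| - M ^ 2 / 2 * |s - t| ^ 3 ≤ ‖γ s - γ t‖ := by
  wlog hts : t ≤ s generalizing s t
  · simpa only [abs_sub_comm, norm_sub_rev] using this t s (le_of_not_ge hts)
  rw [abs_of_nonneg (sub_nonneg.mpr hts)]
  set T := deriv γ t
  have hderiv : ∀ u, HasDerivAt (fun u => ⟪T, γ u⟫) ⟪T, deriv γ u⟫ u := fun u => by
    simpa using (hasDerivAt_const u T).inner ℝ (hγ u).hasDerivAt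
  -- For unit vectors, `⟪T, v⟫ = 1 - ‖v - T‖² / 2`.
  have htangent : ∀ u ∈ interior (Icc t s),
      1 - M ^ 2 / 2 * (s - t) ^ 2 ≤ deriv (fun u => ⟪T, γ u⟫) u := by
    intro u hu
    rw [interior_Icc] at hu
    have hdist : ‖deriv γ u - T‖ ≤ M * (s - t) := by
      have := hlip.norm_sub_le u t
      rw [Real.norm_of_nonneg (by linarith [hu.1])] at this
      exact this.trans (by gcongr; linarith [hu.2])
    have hsq := norm_sub_sq_real (deriv γ u) T
    rw [hunit, hunit, real_inner_comm] at hsq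
    rw [(hderiv u).deriv]
    nlinarith [norm_nonneg (deriv γ u - T), mul_nonneg M.2 (sub_nonneg.mpr hts)]
  have hmvt := (convex_Icc t s).mul_sub_le_image_sub_of_le_deriv
    (fun u _ => (hderiv u).continuousAt.continuousWithinAt)
    (fun u _ => (hderiv u).differentiableAt.differentiableWithinAt) htangent
    t (left_mem_Icc.mpr hts) s (right_mem_Icc.mpr hts) hts
  have hinner : ⟪T, γ s⟫ - ⟪T, γ t⟫ ≤ ‖γ s - γ t‖ := by
    rw [← inner_sub_right]
    simpa [T, hunit] using real_inner_le_norm T (γ s - γ t)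
  nlinarith

theorem arcd_sub_cube_le_norm_sub {M : ℝ≥0} (hper : Periodic γ 1) (hγ : Differentiable ℝ γ)
    (hunit : ∀ s, ‖deriv γ s‖ = 1) (hlip : LipschitzWith M (deriv γ)) {s t : ℝ}
    (h : |s - t| ≤ 1) : arcd s t - M ^ 2 / 2 * arcd s t ^ 3 ≤ ‖γ s - γ t‖ := by
  obtain ⟨s', hs', hd'⟩ := hper.exists_abs_sub_eq_arcd h
  simpa only [hd', hs'] using sub_sub_cube_le_norm_sub hγ hunit hlip s' t

end InnerProductSpace

theorem exists_pos_mul_arcd_le_norm_sub {E : Type*} [NormedAddCommGroup E] {γ : ℝ → E} {K : ℝ}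
    (hγ : Continuous γ) (hper : Periodic γ 1)
    (hinj : ∀ s t : ℝ, γ s = γ t → ∃ n : ℤ, s - t = n) (hK : 0 ≤ K)
    (hcube : ∀ s t : ℝ, |s - t| ≤ 1 → arcd s t - K * arcd s t ^ 3 ≤ ‖γ s - γ t‖) :
    ∃ c > 0, ∀ s ∈ Icc (0 : ℝ) 1, ∀ t ∈ Icc (0 : ℝ) 1, c * arcd s t ≤ ‖γ s - γ t‖ := by
  set δ : ℝ := 1 / (2 * (K + 1))
  have hδ : 0 < δ := by positivity
  have hKδ : K * δ ≤ 1 / 2 := by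
    rw [mul_one_div, div_le_iff₀ (by positivity)]; linarith
  have hcompact : IsCompact ((Icc (0 : ℝ) 1 ×ˢ Icc (0 : ℝ) 1) ∩ {p | δ ≤ arcd p.1 p.2}) :=
    (isCompact_Icc.prod isCompact_Icc).inter_right (isClosed_le continuous_const continuous_arcd)
  obtain ⟨m, hm, hmle⟩ := hcompact.exists_forall_le'
    ((hγ.comp continuous_fst).sub (hγ.comp continuous_snd)).norm.continuousOn
    fun p ⟨⟨hs, ht⟩, hp⟩ => norm_pos_iff.mpr (sub_ne_zero.mpr
        (ne_of_arcd_pos hper hinj (Real.dist_le_of_mem_Icc_01 hs ht) (hδ.trans_le hp)))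
  refine ⟨min (1 / 2) m, lt_min one_half_pos hm, fun s hs t ht => ?_⟩
  have hst : |s - t| ≤ 1 := Real.dist_le_of_mem_Icc_01 hs ht
  have hd := arcd_nonneg hst
  rcases lt_or_ge (arcd s t) δ with hnear | hfar
  · have hsmall : K * arcd s t ^ 2 ≤ 1 / 2 := by
      nlinarith [mul_le_mul_of_nonneg_left hnear.le hK, arcd_le_half s t]
    nlinarith [min_le_left (1 / 2) m, hcube s t hst]
  · have hchord : m ≤ ‖γ s - γ t‖ := hmle (s, t) ⟨⟨hs, ht⟩, hfar⟩
    nlinarith [min_le_right (1 / 2) m, arcd_le_half s t]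

/-- `E^(α)` is well defined for `α < 3`: for `0 < α < 3` and a C² injective closed curve
of length 1 parametrized by arc length, the nonnegative function
`(s,t) ↦ 1/|γ(s)−γ(t)|^α − 1/d(s,t)^α` is integrable on `(ℝ/ℤ)²`. -/
theorem Ealpha_well_defined (α : ℝ) (hα0 : 0 < α) (hα3 : α < 3) (γ : ℝ → E3)
    (hC2 : ContDiff ℝ 2 γ)
    (hper : Function.Periodic γ 1)
    (hinj : ∀ s t : ℝ, γ s = γ t → ∃ n : ℤ, s - t = n)
    (hunit : ∀ s : ℝ, ‖deriv γ s‖ = 1) :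
    IntegrableOn
      (fun p : ℝ × ℝ => 1 / ‖γ p.1 - γ p.2‖ ^ α - 1 / arcd p.1 p.2 ^ α)
      (Set.Icc 0 1 ×ˢ Set.Icc 0 1) := by
  have hγ : Differentiable ℝ γ := hC2.differentiable two_ne_zero
  obtain ⟨M, hM⟩ := exists_lipschitzWith_deriv_of_periodic hper one_ne_zero hC2
  set K : ℝ := M ^ 2 / 2
  have hcube : ∀ s t : ℝ, |s - t| ≤ 1 → arcd s t - K * arcd s t ^ 3 ≤ ‖γ s - γ t‖ :=
    fun s t => arcd_sub_cube_le_norm_sub hper hγ hunit hM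
  obtain ⟨c, hc, hcd⟩ :=
    exists_pos_mul_arcd_le_norm_sub hC2.continuous hper hinj (by positivity) hcube
  have hmeas : Measurable fun p : ℝ × ℝ => 1 / ‖γ p.1 - γ p.2‖ ^ α - 1 / arcd p.1 p.2 ^ α := by
    have := hC2.continuous; unfold arcd; fun_prop
  refine ((integrableOn_arcd_rpow (by linarith : -1 < 2 - α)).const_mul
    (max 1 α * K / c ^ α)).mono' hmeas.aestronglyMeasurable ?_
  filter_upwards [ae_restrict_mem (measurableSet_Icc.prod measurableSet_Icc)] with ⟨s, t⟩ ⟨hs, ht⟩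
  have hst : |s - t| ≤ 1 := Real.dist_le_of_mem_Icc_01 hs ht
  exact abs_one_div_rpow_sub_one_div_rpow_le hα0 hc (by positivity) (arcd_nonneg hst)
    (hcd s hs t ht) (norm_sub_le_arcd hper (lipschitzWith_one_of_norm_deriv_eq_one hγ hunit) hst)
    (by linarith [hcube s t hst])
end
end

section
/- Let m = n+2 ≥ 2, let J = diag(−1, 1, …, 1) ∈ M_m(ℝ), and let 1 ≤ k ≤ m. If A ∈ M_m(ℝ) satisfies AᵀJA = J (i.e. A ∈ O(n+1,1)), then the k-th compound matrix Ψ_k(A) satisfies Ψ_k(A)ᵀ J̃ Ψ_k(A) = J̃, where J̃ is the diagonal matrix indexed by k-element subsets I ⊆ {0, 1, …, m−1} with J̃_{I,I} = +1 if 0 ∈ I and J̃_{I,I} = −1 if 0 ∉ I. In particular Ψ_k(A) ∈ O(N₂, N₁) with N₁ = C(n+1, k) and N₂ = C(n+1, k−1). -/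
/-!
`Ψ_k(A)` is the matrix of `⋀ᵏ A` in the basis `e_{i₁} ∧ ⋯ ∧ e_{iₖ}` (`i₁ < ⋯ < iₖ`) of `⋀ᵏ ℝᵐ`,
so functoriality of `⋀ᵏ` makes `Ψ_k` multiplicative (Cauchy–Binet). It also commutes with
transposition and sends `diag(d)` to `diag(I ↦ ∏_{i ∈ I} d_i)`. Applying `Ψ_k` to `AᵀJA = J`
therefore gives `Ψ_k(A)ᵀ Ψ_k(J) Ψ_k(A) = Ψ_k(J)`, and `Ψ_k(J) = -J̃` because
`∏_{i ∈ I} J_{ii} = -1` exactly when `0 ∈ I`.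
-/

open Matrix

noncomputable section

/-- The `k`-th compound matrix of an `m × m` real matrix `A`: its rows and columns are
indexed by `k`-element subsets of `Fin m` and its `(I,J)` entry is the determinant of
the `k × k` submatrix of `A` with rows `I` and columns `J` (in increasing order). -/
def compound (m k : ℕ) (A : Matrix (Fin m) (Fin m) ℝ) :
    Matrix {I : Finset (Fin m) // I.card = k} {I : Finset (Fin m) // I.card = k} ℝ :=
  fun I J => Matrix.det (Matrix.of fun a b : Fin k =>
    A (I.1.orderIsoOfFin I.2 a) (J.1.orderIsoOfFin J.2 b))

def Finset.subtypeCardEquivPowersetCard (α : Type*) (k : ℕ) :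
    {s : Finset α // s.card = k} ≃ Set.powersetCard α k :=
  Equiv.subtypeEquivRight fun _ => Set.powersetCard.mem_iff.symm

section

variable {m k : ℕ}

theorem compound_apply (A : Matrix (Fin m) (Fin m) ℝ)
    (I J : {I : Finset (Fin m) // I.card = k}) :
    compound m k A I J = (A.submatrix (I.1.orderEmbOfFin I.2) (J.1.orderEmbOfFin J.2)).det :=
  rfl

theorem compound_eq_submatrix_toMatrix_exteriorPower_map (A : Matrix (Fin m) (Fin m) ℝ) :
    compound m k A = (LinearMap.toMatrix ((Pi.basisFun ℝ (Fin m)).exteriorPower k)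
      ((Pi.basisFun ℝ (Fin m)).exteriorPower k) (exteriorPower.map k (toLin' A))).submatrix
        (Finset.subtypeCardEquivPowersetCard (Fin m) k)
        (Finset.subtypeCardEquivPowersetCard (Fin m) k) := by
  ext I J
  rw [submatrix_apply, LinearMap.toMatrix_apply, exteriorPower.basis_apply,
    exteriorPower.map_apply_ιMulti_family, exteriorPower.basis_repr_apply,
    exteriorPower.ιMulti_family, exteriorPower.ιMultiDual_apply_ιMulti, compound_apply,
    ← det_transpose]
  congr 1
  ext a b
  simp [Finset.subtypeCardEquivPowersetCard, Set.powersetCard.ofFinEmbEquiv_symm_apply]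

theorem compound_mul (A B : Matrix (Fin m) (Fin m) ℝ) :
    compound m k (A * B) = compound m k A * compound m k B := by
  simp only [compound_eq_submatrix_toMatrix_exteriorPower_map]
  rw [toLin'_mul, exteriorPower.map_comp,
    LinearMap.toMatrix_comp (v₂ := (Pi.basisFun ℝ (Fin m)).exteriorPower k)]
  exact (submatrix_mul_equiv _ _ _ _ _).symm

theorem compound_transpose (A : Matrix (Fin m) (Fin m) ℝ) :
    compound m k Aᵀ = (compound m k A)ᵀ := by
  ext I J
  rw [transpose_apply, compound_apply, compound_apply, ← transpose_submatrix, det_transpose]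

theorem compound_diagonal (d : Fin m → ℝ) :
    compound m k (diagonal d) =
      diagonal fun I : {I : Finset (Fin m) // I.card = k} => ∏ i ∈ I.1, d i := by
  ext I J
  rw [compound_apply]
  rcases eq_or_ne I J with rfl | hIJ
  · rw [diagonal_apply_eq, submatrix_diagonal _ _ (I.1.orderEmbOfFin I.2).injective, det_diagonal]
    conv_rhs => rw [← Finset.map_orderEmbOfFin_univ I.1 I.2, Finset.prod_map]
    rfl
  · obtain ⟨i, hiI, hiJ⟩ : ∃ i ∈ I.1, i ∉ J.1 := by
      by_contra! hsub
      exact hIJ (Subtype.ext (Finset.eq_of_subset_of_card_le hsub (by rw [I.2, J.2])))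
    obtain ⟨a, rfl⟩ : i ∈ Set.range (I.1.orderEmbOfFin I.2) := by
      rwa [Finset.range_orderEmbOfFin]
    rw [diagonal_apply_ne _ hIJ]
    refine det_eq_zero_of_row_eq_zero a fun b => diagonal_apply_ne _ ?_
    intro h
    exact hiJ (h ▸ J.1.orderEmbOfFin_mem J.2 b)

end

theorem compound_preserves_induced_form_general (n k : ℕ)
    (A : Matrix (Fin (n + 2)) (Fin (n + 2)) ℝ)
    (hA : Aᵀ * Matrix.diagonal (fun i : Fin (n + 2) => if i = 0 then (-1 : ℝ) else 1) * A =
        Matrix.diagonal (fun i : Fin (n + 2) => if i = 0 then (-1 : ℝ) else 1)) :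
    (compound (n + 2) k A)ᵀ *
        Matrix.diagonal (fun I : {I : Finset (Fin (n + 2)) // I.card = k} =>
          if (0 : Fin (n + 2)) ∈ I.1 then (1 : ℝ) else -1) *
        compound (n + 2) k A =
      Matrix.diagonal (fun I : {I : Finset (Fin (n + 2)) // I.card = k} =>
        if (0 : Fin (n + 2)) ∈ I.1 then (1 : ℝ) else -1) := by
  have hJ : diagonal (fun I : {I : Finset (Fin (n + 2)) // I.card = k} =>
      if (0 : Fin (n + 2)) ∈ I.1 then (1 : ℝ) else -1) =
        -compound (n + 2) k (diagonal fun i => if i = 0 then -1 else 1) := by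
    rw [compound_diagonal, diagonal_neg]
    congr 1
    funext I
    rw [Finset.prod_ite_eq']
    split_ifs <;> norm_num
  rw [hJ, mul_neg, neg_mul, ← compound_transpose, ← compound_mul, ← compound_mul, hA]

/-- If `A ∈ O(n+1,1)`, i.e. `AᵀJA = J` with `J = diag(−1,1,…,1)`, then the `k`-th
compound matrix `Ψ_k(A)` satisfies `Ψ_k(A)ᵀ J̃ Ψ_k(A) = J̃`, where `J̃` is diagonal with
entry `+1` at a `k`-subset `I` containing `0` and `−1` otherwise; in particular
`Ψ_k(A) ∈ O(N₂, N₁)` with `N₁ = C(n+1,k)`, `N₂ = C(n+1,k−1)`. -/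
theorem compound_preserves_induced_form (n k : ℕ) (hk1 : 1 ≤ k) (hk : k ≤ n + 2)
    (A : Matrix (Fin (n + 2)) (Fin (n + 2)) ℝ)
    (hA : Aᵀ * Matrix.diagonal (fun i : Fin (n + 2) => if i = 0 then (-1 : ℝ) else 1) * A =
        Matrix.diagonal (fun i : Fin (n + 2) => if i = 0 then (-1 : ℝ) else 1)) :
    (compound (n + 2) k A)ᵀ *
        Matrix.diagonal (fun I : {I : Finset (Fin (n + 2)) // I.card = k} =>
          if (0 : Fin (n + 2)) ∈ I.1 then (1 : ℝ) else -1) *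
        compound (n + 2) k A =
      Matrix.diagonal (fun I : {I : Finset (Fin (n + 2)) // I.card = k} =>
        if (0 : Fin (n + 2)) ∈ I.1 then (1 : ℝ) else -1) :=
  compound_preserves_induced_form_general n k A hA

end
end

section
/- Let m ≥ 1, 1 ≤ k ≤ m, and let p be a nonzero element of the k-th exterior power ⋀^k ℝ^m, with coordinates p_{i₁⋯i_k} (alternating in the indices) with respect to the standard wedge basis. Then p is decomposable, i.e. p = x₁ ∧ ⋯ ∧ x_k for some x₁, …, x_k ∈ ℝ^m, if and only if the Plücker relations hold: for all indices i₁, …, i_{k−1} and j₁, …, j_{k+1} in {0, …, m−1}, Σ_{l=1}^{k+1} (−1)^l p_{i₁⋯i_{k−1} j_l} · p_{j₁⋯ ĵ_l ⋯ j_{k+1}} = 0, where ĵ_l indicates that the index j_l is removed. -/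
/-!
If `p = x₁ ∧ ⋯ ∧ x_k`, fix `i` and view the minor `p(i, t)` as a linear functional of the column
`x(t) ∈ Kᵏ`; the `k + 1` columns `x(j_l)` satisfy the Cramer dependency
`∑ (-1)ˡ det(x(j_ĵl)) x(j_l) = 0`, and applying the functional gives the Plücker relation.

Conversely, specialising the relations yields the exchange identity
`p(u) p(v) = ∑_l p(u[l ↦ v_b]) p(v[b ↦ u_l])`. Choose `v₀` with `p(v₀) ≠ 0` and let
`x_a(t) = p(v₀[a ↦ t])`. The minors of these vectors agree with `p(v₀)ᵏ⁻¹ p` at `v₀` and at every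
tuple differing from `v₀` in one entry, because `x_a(v₀ b)` is `p(v₀)` or `0` as `a = b` or not.
Both sides satisfy the exchange identity, which expresses the value at `v` through values at tuples
with one more entry taken from `v₀`; induction on the number of entries of `v` outside `v₀` shows
that the two sides agree everywhere. Rescaling `x₁` by `p(v₀)¹⁻ᵏ` gives `p = x₁ ∧ ⋯ ∧ x_k`.
-/

open Finset Function

theorem Fin.removeNth_castSucc_snoc {α : Type*} {k : ℕ} (u : Fin (k + 1) → α) (t : α)
    (l : Fin (k + 1)) :
    l.castSucc.removeNth (Fin.snoc u t : Fin (k + 2) → α) = Fin.snoc (l.removeNth u) t := by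
  funext a
  induction a using Fin.lastCases with
  | last => simp [Fin.removeNth, Fin.succAbove_castSucc_of_le l _ (Fin.le_last l)]
  | cast a => simp [Fin.removeNth, Fin.castSucc_succAbove_castSucc]

theorem Finset.card_filter_update_lt {α β : Type*} [Fintype α] [DecidableEq α]
    (P : β → Prop) [DecidablePred P] {v : α → β} {b : α} (hb : P (v b)) {t : β} (ht : ¬P t) :
    #{a | P (update v b t a)} < #{a | P (v a)} := by
  refine card_lt_card ⟨fun a ha => ?_, fun hsub => ?_⟩
  · simp only [mem_filter, mem_univ, true_and] at ha ⊢
    rcases eq_or_ne a b with rfl | hab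
    · exact absurd (by simpa using ha) ht
    · rwa [update_of_ne hab] at ha
  · have hb' := hsub (mem_filter.mpr ⟨mem_univ b, hb⟩)
    rw [mem_filter, update_self] at hb'
    exact ht hb'.2

namespace Plucker

variable {R : Type*} [CommRing R] {ι : Type*} {n k : ℕ}

def coord (x : Fin n → ι → R) (v : Fin n → ι) : R :=
  (Matrix.of fun a b => x a (v b)).det

def IsAlternating (p : (Fin n → ι) → R) : Prop :=
  ∀ (v : Fin n → ι) (σ : Equiv.Perm (Fin n)), p (v ∘ σ) = ((Equiv.Perm.sign σ : ℤ) : R) * p v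

def Relations (p : (Fin (k + 1) → ι) → R) : Prop :=
  ∀ (i : Fin k → ι) (j : Fin (k + 2) → ι),
    ∑ l : Fin (k + 2), (-1 : R) ^ ((l : ℕ) + 1) * p (Fin.snoc i (j l)) * p (l.removeNth j) = 0

theorem sum_neg_one_pow_mul_det_succAbove_smul (y : Fin (n + 1) → Fin n → R) :
    ∑ l : Fin (n + 1), ((-1) ^ (l : ℕ) * (Matrix.of fun a b => y (l.succAbove b) a).det) • y l
      = 0 := by
  funext r
  let M : Matrix (Fin (n + 1)) (Fin (n + 1)) R :=
    Matrix.of (Fin.cons (fun l => y l r) fun a l => y l a)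
  have hM : M.det = 0 := Matrix.det_zero_of_row_eq (Fin.succ_ne_zero r).symm (by ext; simp [M])
  have hminor : ∀ l : Fin (n + 1),
      M.submatrix Fin.succ l.succAbove = Matrix.of fun a b => y (l.succAbove b) a :=
    fun _ => rfl
  rw [Matrix.det_succ_row_zero] at hM
  simpa [hminor, M, Finset.sum_apply, mul_right_comm _ (y _ r)] using hM

theorem isAlternating_coord (x : Fin n → ι → R) : IsAlternating (coord x) :=
  fun v σ => Matrix.det_permute' σ (Matrix.of fun a b => x a (v b))

theorem relations_coord (x : Fin (k + 1) → ι → R) : Relations (coord x) := by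
  intro i j
  let C : Matrix (Fin (k + 1)) (Fin (k + 1)) R :=
    Matrix.of fun a => Fin.snoc (fun b => x a (i b)) 0
  have hlast : ∀ t, coord x (Fin.snoc i t) = C.cramer (fun a => x a t) (Fin.last k) := by
    intro t
    rw [Matrix.cramer_apply, coord]
    congr 1
    ext a b
    induction b using Fin.lastCases <;> simp [C]
  have hdep := congrArg (fun w => C.cramer w (Fin.last k))
    (sum_neg_one_pow_mul_det_succAbove_smul fun l a => x a (j l))
  simp only [map_sum, map_smul, Finset.sum_apply, Pi.smul_apply, smul_eq_mul, map_zero,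
    Pi.zero_apply] at hdep
  rw [← neg_eq_zero, ← hdep, ← Finset.sum_neg_distrib]
  refine Finset.sum_congr rfl fun l _ => ?_
  rw [hlast, pow_succ]
  simp only [coord, Fin.removeNth]
  ring

theorem IsAlternating.sub {p q : (Fin n → ι) → R} (hp : IsAlternating p)
    (hq : IsAlternating q) : IsAlternating (p - q) :=
  fun v σ => by simp only [Pi.sub_apply, hp v σ, hq v σ, mul_sub]

theorem IsAlternating.apply_snoc_removeNth {p : (Fin (k + 1) → ι) → R}
    (hp : IsAlternating p) (v : Fin (k + 1) → ι) (b : Fin (k + 1)) (t : ι) :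
    p (Fin.snoc (b.removeNth v) t) = (-1) ^ ((b : ℕ) + k) * p (update v b t) := by
  have hsnoc : p (Fin.snoc (b.removeNth v) t) = (-1) ^ k * p (Fin.cons t (b.removeNth v)) := by
    rw [Fin.snoc_eq_cons_rotate]
    exact (hp _ (finRotate (k + 1))).trans <| by
      rw [sign_finRotate, add_tsub_cancel_right]; push_cast; rfl
  have hupdate : p (update v b t) = (-1) ^ (b : ℕ) * p (Fin.cons t (b.removeNth v)) := by
    rw [← Fin.insertNth_removeNth, ← Fin.cons_comp_cycleRange, hp, Fin.sign_cycleRange]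
    simp
  rw [hsnoc, hupdate]
  ring_nf
  simp

theorem Relations.mul_eq_sum_update {p : (Fin (k + 1) → ι) → R} (hr : Relations p)
    (hp : IsAlternating p) (u v : Fin (k + 1) → ι) (b : Fin (k + 1)) :
    p u * p v = ∑ l, p (update u l (v b)) * p (update v b (u l)) := by
  have h := hr (b.removeNth v) (Fin.snoc u (v b))
  rw [Fin.sum_univ_castSucc] at h
  simp only [Fin.snoc_castSucc, Fin.snoc_last, Fin.removeNth_castSucc_snoc, Fin.removeNth_last,
    Fin.init_snoc, hp.apply_snoc_removeNth, update_eq_self, Fin.val_castSucc, Fin.val_last] at h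
  have hterm : ∀ l : Fin (k + 1), (-1) ^ ((l : ℕ) + 1) * ((-1) ^ ((b : ℕ) + k) *
      p (update v b (u l))) * ((-1) ^ ((l : ℕ) + k) * p (update u l (v b))) =
      -((-1) ^ (b : ℕ) * (p (update u l (v b)) * p (update v b (u l)))) := fun l => by
    ring_nf; simp
  have hlast : (-1) ^ (k + 1 + 1) * ((-1) ^ ((b : ℕ) + k) * p v) * p u =
      (-1) ^ (b : ℕ) * (p u * p v) := by
    ring_nf; simp
  rwa [sum_congr rfl fun l _ => hterm l, hlast, sum_neg_distrib, ← mul_sum, neg_add_eq_sub,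
    ← mul_sub, (isUnit_neg_one.pow _).mul_right_eq_zero, sub_eq_zero] at h

theorem coord_update_smul (x : Fin n → ι → R) (a : Fin n) (s : R) (v : Fin n → ι) :
    coord (update x a (s • x a)) v = s * coord x v := by
  have hrow : (Matrix.of fun a' b => update x a (s • x a) a' (v b)) =
      (Matrix.of fun a' b => x a' (v b)).updateRow a (s • (Matrix.of fun a' b => x a' (v b)) a) := by
    ext a' b
    rcases eq_or_ne a' a with rfl | h <;> simp [*]
  rw [coord, hrow, Matrix.det_updateRow_smul, Matrix.updateRow_eq_self]
  rfl

def pivotRows (p : (Fin n → ι) → R) (v₀ : Fin n → ι) : Fin n → ι → R :=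
  fun a t => p (update v₀ a t)

section CharZero

variable [NoZeroDivisors R] [CharZero R]

theorem IsAlternating.apply_eq_zero_of_not_injective {p : (Fin n → ι) → R} (hp : IsAlternating p)
    {v : Fin n → ι} (hv : ¬Injective v) : p v = 0 := by
  obtain ⟨a, b, hab, hne⟩ := Function.not_injective_iff.mp hv
  have hswap : v ∘ Equiv.swap a b = v := by simp [Equiv.comp_swap_eq_update, hab]
  have := hp v (Equiv.swap a b)
  rwa [hswap, Equiv.Perm.sign_swap hne, Units.val_neg, Units.val_one, Int.cast_neg, Int.cast_one,
    neg_one_mul, CharZero.eq_neg_self_iff] at this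

/-- Induction on the number of entries of `v` outside the range of `v₀`: each exchange at such an
entry lowers it, and when it is zero, `v` is a permutation of `v₀` or has a repeated entry. -/
theorem IsAlternating.eq_zero_of_forall_update {d : (Fin n → ι) → R} (hd : IsAlternating d)
    {v₀ : Fin n → ι} (h₀ : d v₀ = 0)
    (hexch : ∀ v b, (∀ l, d (update v b (v₀ l)) = 0) → d v = 0) : d = 0 := by
  classical
  funext v
  induction hN : #{b | v b ∉ Set.range v₀} using Nat.strong_induction_on generalizing v with
  | _ N ih =>
  by_cases hv : Injective v
  swap
  · exact hd.apply_eq_zero_of_not_injective hv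
  by_cases hb : ∃ b, v b ∉ Set.range v₀
  · obtain ⟨b, hb⟩ := hb
    refine hexch v b fun l => ih _ ?_ _ rfl
    rw [← hN]
    exact card_filter_update_lt (· ∉ Set.range v₀) hb (by simp)
  · push Not at hb
    choose f hf using hb
    have hvf : v = v₀ ∘ f := funext fun b => (hf b).symm
    have hf : Bijective f := (hvf ▸ hv : Injective (v₀ ∘ f)).of_comp.bijective_of_finite
    rw [hvf, show f = ⇑(Equiv.ofBijective f hf) from rfl, hd, h₀, mul_zero, Pi.zero_apply]

theorem Relations.eq_of_eq_update {p q : (Fin (k + 1) → ι) → R} (hpr : Relations p)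
    (hqr : Relations q) (hp : IsAlternating p) (hq : IsAlternating q) {v₀ : Fin (k + 1) → ι}
    (hv₀ : p v₀ ≠ 0) (hpq : ∀ l t, p (update v₀ l t) = q (update v₀ l t)) : p = q := by
  have h₀ : p v₀ = q v₀ := by simpa using hpq 0 (v₀ 0)
  rw [← sub_eq_zero]
  refine (hp.sub hq).eq_zero_of_forall_update (v₀ := v₀) (sub_eq_zero.mpr h₀)
    fun v b hvanish => ?_
  have hexch : p v₀ * (p - q) v = ∑ l, p (update v₀ l (v b)) * (p - q) (update v b (v₀ l)) :=
    calc p v₀ * (p - q) v = p v₀ * p v - q v₀ * q v := by rw [Pi.sub_apply, mul_sub, h₀]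
      _ = ∑ l, p (update v₀ l (v b)) * p (update v b (v₀ l)) -
          ∑ l, q (update v₀ l (v b)) * q (update v b (v₀ l)) := by
        rw [hpr.mul_eq_sum_update hp, hqr.mul_eq_sum_update hq]
      _ = _ := by simp only [hpq, Pi.sub_apply, mul_sub, sum_sub_distrib]
  rw [sum_eq_zero fun l _ => by rw [hvanish l, mul_zero]] at hexch
  exact (mul_eq_zero.mp hexch).resolve_left hv₀

theorem IsAlternating.coord_pivotRows_update {p : (Fin (k + 1) → ι) → R} (hp : IsAlternating p)
    (v₀ : Fin (k + 1) → ι) (l : Fin (k + 1)) (t : ι) :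
    coord (pivotRows p v₀) (update v₀ l t) = p v₀ ^ k * p (update v₀ l t) := by
  have hdiag : (Matrix.of fun a b => pivotRows p v₀ a (v₀ b)) = p v₀ • 1 := by
    ext a b
    rcases eq_or_ne a b with rfl | hab
    · simp [pivotRows]
    · have : ¬Injective (update v₀ a (v₀ b)) := fun h => hab (h (by simp [update_of_ne hab.symm]))
      simp [pivotRows, hab, hp.apply_eq_zero_of_not_injective this]
  have hcol : (Matrix.of fun a b => pivotRows p v₀ a (update v₀ l t b)) =
      (p v₀ • (1 : Matrix (Fin (k + 1)) (Fin (k + 1)) R)).updateCol l (pivotRows p v₀ · t) := by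
    rw [← hdiag]
    ext a b
    rcases eq_or_ne b l with rfl | hbl
    · simp
    · simp [hbl]
  rw [coord, hcol, ← Matrix.cramer_apply, Matrix.cramer_eq_adjugate_mulVec, Matrix.adjugate_smul,
    Matrix.adjugate_one]
  simp [Matrix.smul_mulVec, pivotRows]

end CharZero

theorem Relations.exists_eq_coord {K : Type*} [Field K] [CharZero K]
    {p : (Fin (k + 1) → ι) → K} (hpr : Relations p) (hp : IsAlternating p) (hp0 : p ≠ 0) :
    ∃ x, p = coord x := by
  obtain ⟨v₀, hv₀⟩ := Function.ne_iff.mp hp0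
  let x := update (pivotRows p v₀) 0 ((p v₀ ^ k)⁻¹ • pivotRows p v₀ 0)
  refine ⟨x, hpr.eq_of_eq_update (relations_coord x) hp (isAlternating_coord x) hv₀ fun l t => ?_⟩
  rw [coord_update_smul, hp.coord_pivotRows_update, inv_mul_cancel_left₀ (pow_ne_zero _ hv₀)]

end Plucker

theorem plucker_relations_iff_decomposable_general (m k' : ℕ)
    (p : (Fin (k' + 1) → Fin m) → ℝ)
    (halt : ∀ (v : Fin (k' + 1) → Fin m) (σ : Equiv.Perm (Fin (k' + 1))),
      p (v ∘ σ) = ((Equiv.Perm.sign σ : ℤ) : ℝ) * p v)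
    (hp : p ≠ 0) :
    (∃ x : Fin (k' + 1) → (Fin m → ℝ),
        ∀ v : Fin (k' + 1) → Fin m,
          p v = Matrix.det (Matrix.of fun a b : Fin (k' + 1) => x a (v b))) ↔
      ∀ (i : Fin k' → Fin m) (j : Fin (k' + 2) → Fin m),
        ∑ l : Fin (k' + 2),
          (-1 : ℝ) ^ ((l : ℕ) + 1) * p (Fin.snoc i (j l)) *
            p (fun a => j (l.succAbove a)) = 0 := by
  constructor
  · rintro ⟨x, hx⟩
    obtain rfl : p = Plucker.coord x := funext hx
    exact Plucker.relations_coord x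
  · intro hrel
    obtain ⟨x, rfl⟩ := Plucker.Relations.exists_eq_coord hrel halt hp
    exact ⟨x, fun _ => rfl⟩

/-- Plücker relations characterize decomposability: a nonzero alternating element `p` of
`⋀^k ℝ^m`, given by its coordinates `p_{i₁⋯i_k}` (alternating in the indices), is
decomposable, i.e. `p = x₁ ∧ ⋯ ∧ x_k` (so `p_{i₁⋯i_k} = det[x_{a,i_b}]`), if and only if
for all indices `i₁, …, i_{k−1}` and `j₁, …, j_{k+1}`,
`Σ_{l=1}^{k+1} (−1)^l p_{i₁⋯i_{k−1}j_l} p_{j₁⋯ĵ_l⋯j_{k+1}} = 0`. -/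
theorem plucker_relations_iff_decomposable (m k' : ℕ) (hm : 1 ≤ m) (hk : k' + 1 ≤ m)
    (p : (Fin (k' + 1) → Fin m) → ℝ)
    (halt : ∀ (v : Fin (k' + 1) → Fin m) (σ : Equiv.Perm (Fin (k' + 1))),
      p (v ∘ σ) = ((Equiv.Perm.sign σ : ℤ) : ℝ) * p v)
    (hrep : ∀ v : Fin (k' + 1) → Fin m, ¬Function.Injective v → p v = 0)
    (hp : p ≠ 0) :
    (∃ x : Fin (k' + 1) → (Fin m → ℝ),
        ∀ v : Fin (k' + 1) → Fin m,
          p v = Matrix.det (Matrix.of fun a b : Fin (k' + 1) => x a (v b))) ↔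
      ∀ (i : Fin k' → Fin m) (j : Fin (k' + 2) → Fin m),
        ∑ l : Fin (k' + 2),
          (-1 : ℝ) ^ ((l : ℕ) + 1) * p (Fin.snoc i (j l)) *
            p (fun a => j (l.succAbove a)) = 0 :=
  plucker_relations_iff_decomposable_general m k' p halt hp
end

section
/- Let γ, η: ℝ → ℝ⁵ be C¹ curves lying on the light cone of the Minkowski form B on ℝ⁵, i.e. B(γ(x), γ(x)) = 0 and B(η(y), η(y)) = 0 for all x, y. On the open set where B(γ(x), η(y)) ≠ 0, define s(x,y) = γ(x) ∧ η(y) / √(B₂(γ(x)∧η(y), γ(x)∧η(y))) ∈ ⋀²ℝ⁵ (note B₂(γ∧η, γ∧η) = B(γ,η)² > 0 there). Then the partial derivatives of s are lightlike for the induced form: B₂(∂s/∂x, ∂s/∂x) = 0 and B₂(∂s/∂y, ∂s/∂y) = 0 at every such point. (In the notation of the paper: ⟨s_x, s_x⟩ = ⟨s_y, s_y⟩ = 0.) -/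
/-!
When `b` is lightlike, `B₂(a ∧ b, a ∧ b) = B(a, b)²`, so the normalized wedge `s(u)` of `γ(u)`
and `b` is `g(u) ∧ b` with `g = γ / |B(γ, b)|`, and `B₂(s', s') = B(g', b)²`. But
`B(g(u), b) = sign B(γ(u), b)` is locally constant where `B(γ, b) ≠ 0`, so `B(g', b) = 0`.
The `y`-derivative reduces to the `x`-derivative since `s` changes sign when its arguments swap.
-/

noncomputable section

/-- The Minkowski bilinear form `B(x,y) = −x₀y₀ + Σ_{i=1}^{4} x_i y_i` on `ℝ⁵`. -/
def B5 (x y : Fin 5 → ℝ) : ℝ := (∑ i, x i * y i) - 2 * x 0 * y 0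

/-- The Lorentz signature vector `η = (−1,1,1,1,1)`. -/
def lsgn : Fin 5 → ℝ := fun i => if i = 0 then -1 else 1

/-- The wedge `a ∧ b ∈ ⋀²ℝ⁵`, realized as the antisymmetric array
`(a ∧ b)_{ij} = a_i b_j − a_j b_i`. -/
def wedge2 (a b : Fin 5 → ℝ) : Fin 5 → Fin 5 → ℝ := fun i j => a i * b j - a j * b i

/-- The bilinear form induced by `B` on `⋀²ℝ⁵`: on decomposables it satisfies
`B₂(a∧b, c∧d) = −(B(a,c)B(b,d) − B(a,d)B(b,c))`. -/
def B2 (M N : Fin 5 → Fin 5 → ℝ) : ℝ :=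
  -(1 / 2) * ∑ i, ∑ j, lsgn i * lsgn j * M i j * N i j

open Filter Topology

def normalizedWedge (a b : Fin 5 → ℝ) : Fin 5 → Fin 5 → ℝ :=
  (Real.sqrt (B2 (wedge2 a b) (wedge2 a b)))⁻¹ • wedge2 a b

theorem B5_comm (a b : Fin 5 → ℝ) : B5 a b = B5 b a := by
  simp only [B5, mul_comm (a _)]
  ring

theorem B5_smul_left (r : ℝ) (a b : Fin 5 → ℝ) : B5 (r • a) b = r * B5 a b := by
  simp only [B5, Fin.sum_univ_five, Pi.smul_apply, smul_eq_mul]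
  ring

theorem wedge2_smul_left (r : ℝ) (a b : Fin 5 → ℝ) : wedge2 (r • a) b = r • wedge2 a b := by
  ext i j
  simp only [wedge2, Pi.smul_apply, smul_eq_mul]
  ring

theorem wedge2_comm (a b : Fin 5 → ℝ) : wedge2 a b = -wedge2 b a := by
  ext i j
  simp only [wedge2, Pi.neg_apply]
  ring

theorem B2_neg_neg (M N : Fin 5 → Fin 5 → ℝ) : B2 (-M) (-N) = B2 M N := by
  simp only [B2, Pi.neg_apply, mul_neg, neg_mul, neg_neg]

theorem B2_wedge2_wedge2 (a b c d : Fin 5 → ℝ) :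
    B2 (wedge2 a b) (wedge2 c d) = -(B5 a c * B5 b d - B5 a d * B5 b c) := by
  simp [B2, wedge2, B5, lsgn, Fin.sum_univ_five]
  ring

theorem B2_wedge2_self_of_null (a : Fin 5 → ℝ) {b : Fin 5 → ℝ} (hb : B5 b b = 0) :
    B2 (wedge2 a b) (wedge2 a b) = B5 a b ^ 2 := by
  rw [B2_wedge2_wedge2, hb, B5_comm b a]
  ring

theorem normalizedWedge_comm (a b : Fin 5 → ℝ) : normalizedWedge a b = -normalizedWedge b a := by
  rw [normalizedWedge, normalizedWedge, wedge2_comm a b, B2_neg_neg, smul_neg]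

theorem normalizedWedge_eq_of_null (a : Fin 5 → ℝ) {b : Fin 5 → ℝ} (hb : B5 b b = 0) :
    normalizedWedge a b = wedge2 (|B5 a b|⁻¹ • a) b := by
  rw [normalizedWedge, B2_wedge2_self_of_null a hb, Real.sqrt_sq_eq_abs, wedge2_smul_left]

theorem inv_abs_mul_self_eq_sign (r : ℝ) : |r|⁻¹ * r = SignType.sign r := by
  rcases eq_or_ne r 0 with rfl | hr
  · simp
  · rw [inv_mul_eq_iff_eq_mul₀ (abs_ne_zero.2 hr), abs_mul_sign]

section Derivatives

variable {g : ℝ → Fin 5 → ℝ} {g' : Fin 5 → ℝ} {x : ℝ}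

theorem HasDerivAt.B5_left (hg : HasDerivAt g g' x) (b : Fin 5 → ℝ) :
    HasDerivAt (fun u => B5 (g u) b) (B5 g' b) x := by
  have hc := hasDerivAt_pi.1 hg
  exact (HasDerivAt.fun_sum fun i _ => (hc i).mul_const (b i)).sub
    (((hc 0).const_mul 2).mul_const (b 0))

theorem HasDerivAt.wedge2_left (hg : HasDerivAt g g' x) (b : Fin 5 → ℝ) :
    HasDerivAt (fun u => wedge2 (g u) b) (wedge2 g' b) x := by
  have hc := hasDerivAt_pi.1 hg
  exact hasDerivAt_pi.2 fun i => hasDerivAt_pi.2 fun j =>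
    ((hc i).mul_const (b j)).sub ((hc j).mul_const (b i))

theorem B2_deriv_normalizedWedge_left_eq_zero {γ : ℝ → Fin 5 → ℝ} {b : Fin 5 → ℝ}
    (hγ : DifferentiableAt ℝ γ x) (hb : B5 b b = 0) (hx : B5 (γ x) b ≠ 0) :
    B2 (deriv (fun u => normalizedWedge (γ u) b) x)
      (deriv (fun u => normalizedWedge (γ u) b) x) = 0 := by
  set f := fun u => B5 (γ u) b
  set g := fun u => |f u|⁻¹ • γ u
  have hf : DifferentiableAt ℝ f x := (hγ.hasDerivAt.B5_left b).differentiableAt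
  have hg : HasDerivAt g (deriv g x) x :=
    (((hf.abs hx).inv (abs_ne_zero.2 hx)).smul hγ).hasDerivAt
  have hs : (fun u => normalizedWedge (γ u) b) = fun u => wedge2 (g u) b :=
    funext fun u => normalizedWedge_eq_of_null (γ u) hb
  have hsign : (fun u => B5 (g u) b) =ᶠ[𝓝 x] fun _ => (SignType.sign (f x) : ℝ) := by
    have hloc : ∀ᶠ u in 𝓝 x, SignType.sign (f u) = SignType.sign (f x) := by
      have := ((continuousAt_sign_of_ne_zero (a := f x) hx).comp (x := x) hf.continuousAt).tendsto
      rwa [nhds_discrete SignType, tendsto_pure] at this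
    filter_upwards [hloc] with u hu
    rw [← hu, ← inv_abs_mul_self_eq_sign]
    exact B5_smul_left _ _ _
  rw [hs, (hg.wedge2_left b).deriv, B2_wedge2_self_of_null _ hb, ← (hg.B5_left b).deriv,
    hsign.deriv_eq, deriv_const, sq, mul_zero]

end Derivatives

/-- For C¹ curves `γ, η` on the light cone, the partial derivatives of the normalized
wedge `s(x,y) = γ(x) ∧ η(y) / √(B₂(γ(x)∧η(y), γ(x)∧η(y)))` are lightlike for the
induced form: `⟨s_x, s_x⟩ = ⟨s_y, s_y⟩ = 0` wherever `B(γ(x), η(y)) ≠ 0`. -/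
theorem normalized_wedge_partials_lightlike (γ η : ℝ → (Fin 5 → ℝ))
    (hγ : ContDiff ℝ 1 γ) (hη : ContDiff ℝ 1 η)
    (hγl : ∀ x : ℝ, B5 (γ x) (γ x) = 0) (hηl : ∀ y : ℝ, B5 (η y) (η y) = 0)
    (x y : ℝ) (hxy : B5 (γ x) (η y) ≠ 0) :
    B2 (deriv (fun u => (Real.sqrt (B2 (wedge2 (γ u) (η y)) (wedge2 (γ u) (η y))))⁻¹ •
          wedge2 (γ u) (η y)) x)
       (deriv (fun u => (Real.sqrt (B2 (wedge2 (γ u) (η y)) (wedge2 (γ u) (η y))))⁻¹ •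
          wedge2 (γ u) (η y)) x) = 0 ∧
    B2 (deriv (fun v => (Real.sqrt (B2 (wedge2 (γ x) (η v)) (wedge2 (γ x) (η v))))⁻¹ •
          wedge2 (γ x) (η v)) y)
       (deriv (fun v => (Real.sqrt (B2 (wedge2 (γ x) (η v)) (wedge2 (γ x) (η v))))⁻¹ •
          wedge2 (γ x) (η v)) y) = 0 := by
  refine ⟨B2_deriv_normalizedWedge_left_eq_zero (hγ.differentiable one_ne_zero x) (hηl y) hxy, ?_⟩
  change B2 (deriv (fun v => normalizedWedge (γ x) (η v)) y)
    (deriv (fun v => normalizedWedge (γ x) (η v)) y) = 0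
  simp_rw [normalizedWedge_comm (γ x)]
  rw [deriv.fun_neg, B2_neg_neg]
  exact B2_deriv_normalizedWedge_left_eq_zero (hη.differentiable one_ne_zero y) (hγl x)
    (by rwa [B5_comm])
end
end
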